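/- Let p be a prime, let n ≥ 0 be an even integer, and set q_n = (p^n − 1)/(p + 1). Let L ∈ ℤ_p⟦T⟧ be nonzero with λ(L) < p^n − q_n, and let θ ∈ ℤ_p[T] be a polynomial of degree < p^n such that ω_n divides θ − ω_n^−·L in ℤ_p⟦T⟧, where ω_n^− = ∏_{1 ≤ i ≤ n, i odd} Φ_{p^i}(1+T). Then θ ≠ 0, μ(θ) = μ(L), and λ(θ) = λ(L) + q_n. -/

import Mathlib

open PowerSeries Polynomial Classical in
/-- `p`-adic valuation on `ℤ_[p]`, with value `⊤` at `0`. -/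
noncomputable def vp (p : ℕ) [Fact p.Prime] (x : ℤ_[p]) : ℕ∞ :=
  if x = 0 then ⊤ else x.valuation

/-- Iwasawa `μ`-invariant: the minimum of the `p`-adic valuations of the coefficients. -/
noncomputable def mu (p : ℕ) [Fact p.Prime] (F : PowerSeries ℤ_[p]) : ℕ∞ :=
  ⨅ i : ℕ, vp p (PowerSeries.coeff i F)

/-- Iwasawa `λ`-invariant: the least index whose coefficient valuation attains `μ`. -/
noncomputable def lam (p : ℕ) [Fact p.Prime] (F : PowerSeries ℤ_[p]) : ℕ :=
  sInf { i : ℕ | vp p (PowerSeries.coeff i F) = mu p F }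

/-!
Write `L = p ^ μ L₀` with `L₀ ≢ 0 (mod p)`. Modulo `p`, `ω_n ≡ T ^ p ^ n` and, since
`Φ_{p^i}(1 + T) ≡ T ^ (p ^ i - p ^ (i - 1))`, also `ω_n⁻ ≡ T ^ q_n` (for even `n` these exponents
add up to `q_n`). Write `θ = ω_n⁻ L + ω_n G`. If `p ^ j` divides `θ` and `G` for some `j < μ`, then
`θ / p ^ j ≡ T ^ p ^ n · G / p ^ j (mod p)`, and since `deg θ < p ^ n` both sides vanish:
`p ^ (j + 1)` divides `θ` and `G`. Hence `θ = p ^ μ θ₀` with `θ₀ ≡ T ^ q_n L₀ + T ^ p ^ n G₀ (mod p)`,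
a series of order `λ(L) + q_n < p ^ n`.
-/

section ReductionModP

open Polynomial

variable {p : ℕ} [Fact p.Prime]

theorem cyclotomic_prime_pow_comp_one_add_X {i : ℕ} (hi : 0 < i) :
    (cyclotomic (p ^ i) (ZMod p)).comp (1 + X) = X ^ (p ^ i - p ^ (i - 1)) := by
  have h := cyclotomic_mul_prime_pow_eq (ZMod p) (m := 1) (Fact.out : p.Prime).not_dvd_one hi
  rw [mul_one] at h
  rw [h, cyclotomic_one, pow_comp, sub_comp, X_comp, one_comp, add_sub_cancel_left]

theorem map_toZMod_coe_prod_cyclotomic_comp (s : Finset ℕ) (hs : ∀ i ∈ s, 0 < i) :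
    PowerSeries.map PadicInt.toZMod
        ((∏ i ∈ s, (cyclotomic (p ^ i) ℤ_[p]).comp (1 + X) : ℤ_[p][X]) : PowerSeries ℤ_[p])
      = PowerSeries.X ^ (∑ i ∈ s, (p ^ i - p ^ (i - 1))) := by
  have hmod : (∏ i ∈ s, (cyclotomic (p ^ i) ℤ_[p]).comp (1 + X)).map PadicInt.toZMod
      = X ^ (∑ i ∈ s, (p ^ i - p ^ (i - 1))) := by
    rw [Polynomial.map_prod, ← Finset.prod_pow_eq_pow_sum]
    refine Finset.prod_congr rfl fun i hi => ?_
    rw [Polynomial.map_comp, map_cyclotomic, Polynomial.map_add, Polynomial.map_one,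
      Polynomial.map_X, cyclotomic_prime_pow_comp_one_add_X (hs i hi)]
  rw [← polynomial_map_coe, hmod, coe_pow, coe_X]

theorem map_toZMod_coe_one_add_X_pow_sub_one (n : ℕ) :
    PowerSeries.map PadicInt.toZMod (((1 + X) ^ p ^ n - 1 : ℤ_[p][X]) : PowerSeries ℤ_[p])
      = PowerSeries.X ^ p ^ n := by
  rw [← polynomial_map_coe, ← coe_X, ← coe_pow]
  congr 1
  simp only [Polynomial.map_sub, Polynomial.map_pow, Polynomial.map_add, Polynomial.map_one,
    Polynomial.map_X]
  rw [add_pow_char_pow, one_pow, add_sub_cancel_left]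

theorem coeff_coe_eq_zero_of_degree_lt {R : Type*} [Semiring R] {f : R[X]} {N : ℕ}
    (hf : f.degree < N) (i : ℕ) (hi : N ≤ i) : PowerSeries.coeff i (f : PowerSeries R) = 0 := by
  rw [coeff_coe]
  exact coeff_eq_zero_of_degree_lt (hf.trans_le (by exact_mod_cast hi))

end ReductionModP

theorem succ_mul_sum_odd_sub_add_one {p n : ℕ} (hp : 0 < p) (hn : Even n) :
    (p + 1) * ∑ i ∈ (Finset.Icc 1 n).filter Odd, (p ^ i - p ^ (i - 1)) + 1 = p ^ n := by
  obtain ⟨k, rfl⟩ := hn.two_dvd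
  clear hn
  induction k with
  | zero => simp
  | succ k ih =>
    have hodd : (Finset.Icc 1 (2 * (k + 1))).filter Odd
        = insert (2 * k + 1) ((Finset.Icc 1 (2 * k)).filter Odd) := by
      ext i
      simp only [Finset.mem_filter, Finset.mem_Icc, Finset.mem_insert, Nat.odd_iff]
      omega
    rw [hodd, Finset.sum_insert (by simp), Nat.add_sub_cancel, mul_add]
    have h : p ^ (2 * k) ≤ p ^ (2 * k + 1) := Nat.pow_le_pow_right hp (by omega)
    zify [h] at ih ⊢
    linear_combination ih

theorem sub_one_div_succ_eq_sum_odd {p n : ℕ} (hp : 0 < p) (hn : Even n) :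
    (p ^ n - 1) / (p + 1) = ∑ i ∈ (Finset.Icc 1 n).filter Odd, (p ^ i - p ^ (i - 1)) :=
  Nat.div_eq_of_eq_mul_left (Nat.succ_pos p) <| by
    rw [← succ_mul_sum_odd_sub_add_one hp hn, Nat.add_sub_cancel, mul_comm]

namespace PowerSeries

section Reduction

variable {R S : Type*} [CommRing R] [CommRing S]

theorem C_dvd_iff_dvd_coeff (a : R) (F : R⟦X⟧) : C a ∣ F ↔ ∀ i, a ∣ coeff i F := by
  refine ⟨fun ⟨G, hG⟩ i => ⟨coeff i G, by rw [hG, coeff_C_mul]⟩, fun h => ?_⟩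
  choose G hG using h
  exact ⟨mk G, ext fun i => by rw [coeff_C_mul, coeff_mk, hG]⟩

theorem map_eq_zero_iff_C_dvd {f : R →+* S} {π : R} (hf : RingHom.ker f = Ideal.span {π})
    (F : R⟦X⟧) : map f F = 0 ↔ C π ∣ F := by
  rw [C_dvd_iff_dvd_coeff, PowerSeries.ext_iff]
  simp only [coeff_map, map_zero, ← RingHom.mem_ker, hf, Ideal.mem_span_singleton]

theorem eq_zero_of_eq_X_pow_mul {N : ℕ} {φ ψ : S⟦X⟧} (hφ : ∀ i, N ≤ i → coeff i φ = 0)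
    (h : φ = X ^ N * ψ) : ψ = 0 :=
  ext fun i => by rw [← coeff_X_pow_mul ψ N i, ← h, hφ _ (Nat.le_add_left N i), map_zero]

variable {f : R →+* S} {π : R} {N : ℕ} {Ω : R⟦X⟧}

theorem C_dvd_of_C_dvd_sub_mul (hf : RingHom.ker f = Ideal.span {π}) (hΩ : map f Ω = X ^ N)
    {θ G : R⟦X⟧} (hθ : ∀ i, N ≤ i → coeff i θ = 0) (h : C π ∣ θ - Ω * G) :
    C π ∣ θ ∧ C π ∣ G := by
  have hθG : map f θ = X ^ N * map f G := by
    rw [← sub_eq_zero, ← hΩ, ← map_mul, ← map_sub, map_eq_zero_iff_C_dvd hf]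
    exact h
  have hG : map f G = 0 :=
    eq_zero_of_eq_X_pow_mul (fun i hi => by rw [coeff_map, hθ i hi, map_zero]) hθG
  rw [← map_eq_zero_iff_C_dvd hf, ← map_eq_zero_iff_C_dvd hf, hθG, hG, mul_zero]
  exact ⟨rfl, rfl⟩

theorem C_pow_dvd_of_C_pow_dvd_sub_mul [IsDomain R] (hπ : π ≠ 0)
    (hf : RingHom.ker f = Ideal.span {π}) (hΩ : map f Ω = X ^ N) (k : ℕ) {θ G : R⟦X⟧}
    (hθ : ∀ i, N ≤ i → coeff i θ = 0) (h : C π ^ k ∣ θ - Ω * G) :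
    C π ^ k ∣ θ ∧ C π ^ k ∣ G := by
  induction k generalizing θ G with
  | zero => simp
  | succ k ih =>
    obtain ⟨⟨θ', rfl⟩, ⟨G', rfl⟩⟩ := ih hθ (dvd_trans (pow_dvd_pow _ k.le_succ) h)
    have hθ' : ∀ i, N ≤ i → coeff i θ' = 0 := fun i hi => by
      simpa [← map_pow, coeff_C_mul, hπ] using hθ i hi
    have hCk : C π ^ k ≠ 0 := pow_ne_zero _ ((map_ne_zero_iff _ C_injective).2 hπ)
    rw [show C π ^ k * θ' - Ω * (C π ^ k * G') = C π ^ k * (θ' - Ω * G') by ring, pow_succ,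
      mul_dvd_mul_iff_left hCk] at h
    obtain ⟨hθ'_dvd, hG'_dvd⟩ := C_dvd_of_C_dvd_sub_mul hf hΩ hθ' h
    exact ⟨pow_succ (C π) k ▸ mul_dvd_mul_left _ hθ'_dvd,
      pow_succ (C π) k ▸ mul_dvd_mul_left _ hG'_dvd⟩

end Reduction

theorem order_X_pow_mul_add_X_pow_mul {R : Type*} [Semiring R] [NoZeroDivisors R]
    [Nontrivial R] {s N : ℕ} (a b : R⟦X⟧) (h : s + a.order < N) :
    (X ^ s * a + X ^ N * b).order = s + a.order := by
  have hb : (N : ℕ∞) ≤ (X ^ N * b).order := by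
    rw [order_mul, order_X_pow]; exact le_self_add
  rw [order_add_of_order_ne, order_mul, order_X_pow, min_eq_left (h.trans_le hb).le]
  rw [order_mul, order_X_pow]
  exact (h.trans_le hb).ne

end PowerSeries

open PowerSeries

section PadicInt

variable {p : ℕ} [Fact p.Prime]

theorem ker_toZMod_eq_span_p :
    RingHom.ker (PadicInt.toZMod (p := p)) = Ideal.span {(p : ℤ_[p])} := by
  rw [PadicInt.ker_toZMod, PadicInt.maximalIdeal_eq_span_p]

theorem pow_dvd_iff_le_vp (k : ℕ) (x : ℤ_[p]) : (p : ℤ_[p]) ^ k ∣ x ↔ (k : ℕ∞) ≤ vp p x := by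
  rcases eq_or_ne x 0 with rfl | hx
  · simp [vp]
  · rw [vp, if_neg hx, ← Ideal.mem_span_singleton, PadicInt.mem_span_pow_iff_le_valuation x hx,
      Nat.cast_le]

theorem vp_eq_zero_iff (x : ℤ_[p]) : vp p x = 0 ↔ PadicInt.toZMod x ≠ 0 := by
  rw [Ne, ← RingHom.mem_ker, ker_toZMod_eq_span_p, Ideal.mem_span_singleton,
    ← pow_one (p : ℤ_[p]), pow_dvd_iff_le_vp, Nat.cast_one, Order.one_le_iff_ne_zero, not_not]

theorem vp_p_pow_mul (m : ℕ) (x : ℤ_[p]) : vp p ((p : ℤ_[p]) ^ m * x) = m + vp p x := by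
  rcases eq_or_ne x 0 with rfl | hx
  · simp [vp]
  · rw [vp, vp, if_neg hx, if_neg (mul_ne_zero (pow_ne_zero _ (NeZero.ne _)) hx),
      PadicInt.valuation_p_pow_mul m x hx, Nat.cast_add]

theorem mu_eq_and_lam_eq_of_eq_C_pow_mul {F F₀ : ℤ_[p]⟦X⟧} {m l : ℕ}
    (hF : F = C (p : ℤ_[p]) ^ m * F₀) (hl : (map PadicInt.toZMod F₀).order = l) :
    mu p F = m ∧ lam p F = l := by
  have hvp : ∀ i, vp p (coeff i F) = m + vp p (coeff i F₀) := fun i => by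
    rw [hF, ← map_pow, coeff_C_mul, vp_p_pow_mul]
  obtain ⟨hl_ne, hl_min⟩ := order_eq_nat.1 hl
  have hmu : mu p F = m := by
    refine le_antisymm (iInf_le_of_le l ?_) (le_iInf fun i => hvp i ▸ le_self_add)
    rw [hvp, (vp_eq_zero_iff _).2 (by rwa [← coeff_map]), add_zero]
  have hset :
      {i | vp p (coeff i F) = mu p F} = {i | coeff i (map PadicInt.toZMod F₀) ≠ 0} := by
    ext i
    simp [hvp, hmu, coeff_map, ← vp_eq_zero_iff]
  refine ⟨hmu, ?_⟩
  rw [lam, hset]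
  exact le_antisymm (Nat.sInf_le hl_ne)
    (le_csInf ⟨l, hl_ne⟩ fun i hi => not_lt.1 fun h => hi (hl_min i h))

theorem exists_eq_C_pow_mul_of_ne_zero {F : ℤ_[p]⟦X⟧} (hF : F ≠ 0) :
    ∃ (m : ℕ) (F₀ : ℤ_[p]⟦X⟧), F = C (p : ℤ_[p]) ^ m * F₀ ∧ map PadicInt.toZMod F₀ ≠ 0 := by
  have hp : ¬IsUnit (C (p : ℤ_[p])) := fun h =>
    PadicInt.p_nonunit (by simpa using h.map constantCoeff)
  have hfin := FiniteMultiplicity.of_not_isUnit hp hF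
  obtain ⟨F₀, hF₀⟩ := pow_multiplicity_dvd (C (p : ℤ_[p])) F
  refine ⟨_, F₀, hF₀, fun h => hfin.not_pow_dvd_of_multiplicity_lt (lt_add_one _) ?_⟩
  obtain ⟨H, rfl⟩ := (map_eq_zero_iff_C_dvd ker_toZMod_eq_span_p F₀).1 h
  exact ⟨H, by rwa [pow_succ, mul_assoc]⟩

theorem mu_eq_and_lam_eq_of_sub_mul_eq {N s m l : ℕ} {θ W Ω L₀ G : ℤ_[p]⟦X⟧}
    (hθ : ∀ i, N ≤ i → coeff i θ = 0) (hW : map PadicInt.toZMod W = X ^ s)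
    (hΩ : map PadicInt.toZMod Ω = X ^ N) (hl : (map PadicInt.toZMod L₀).order = l)
    (hlt : s + l < N) (h : θ - W * (C (p : ℤ_[p]) ^ m * L₀) = Ω * G) :
    mu p θ = m ∧ lam p θ = s + l := by
  obtain ⟨⟨θ₀, rfl⟩, ⟨G₀, rfl⟩⟩ := C_pow_dvd_of_C_pow_dvd_sub_mul (NeZero.ne (p : ℤ_[p]))
    ker_toZMod_eq_span_p hΩ m hθ (G := G) ⟨W * L₀, by linear_combination h⟩
  have hθ₀ : θ₀ = W * L₀ + Ω * G₀ :=
    mul_left_cancel₀ (pow_ne_zero m ((map_ne_zero_iff _ C_injective).2 (NeZero.ne _)))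
      (by linear_combination h)
  refine mu_eq_and_lam_eq_of_eq_C_pow_mul rfl ?_
  rw [hθ₀, map_add, map_mul, map_mul, hW, hΩ, order_X_pow_mul_add_X_pow_mul, hl]
  · push_cast; rfl
  · rw [hl]; exact_mod_cast hlt

end PadicInt

theorem stmt_11 (p : ℕ) [Fact p.Prime] (n : ℕ) (hn : Even n)
    (L : PowerSeries ℤ_[p]) (hL : L ≠ 0) (hlam : lam p L < p ^ n - (p ^ n - 1) / (p + 1))
    (θ : Polynomial ℤ_[p]) (hdeg : θ.degree < (p ^ n : ℕ))
    (hdvd : (((1 + Polynomial.X) ^ p ^ n - 1 : Polynomial ℤ_[p]) : PowerSeries ℤ_[p])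
      ∣ ((θ : PowerSeries ℤ_[p])
        - ((∏ i ∈ (Finset.Icc 1 n).filter (fun i => Odd i),
            (Polynomial.cyclotomic (p ^ i) ℤ_[p]).comp (1 + Polynomial.X) : Polynomial ℤ_[p]) : PowerSeries ℤ_[p]) * L)) :
    θ ≠ 0 ∧ mu p (θ : PowerSeries ℤ_[p]) = mu p L
      ∧ lam p (θ : PowerSeries ℤ_[p]) = lam p L + (p ^ n - 1) / (p + 1) := by
  obtain ⟨m, L₀, rfl, hL₀⟩ := exists_eq_C_pow_mul_of_ne_zero hL
  obtain ⟨l, hl⟩ := ENat.ne_top_iff_exists.1 (order_finite_iff_ne_zero.2 hL₀).ne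
  obtain ⟨hmuL, hlamL⟩ := mu_eq_and_lam_eq_of_eq_C_pow_mul (m := m) rfl hl.symm
  rw [sub_one_div_succ_eq_sum_odd (Fact.out : p.Prime).pos hn] at hlam ⊢
  obtain ⟨G, hG⟩ := hdvd
  have hW := map_toZMod_coe_prod_cyclotomic_comp (p := p) ((Finset.Icc 1 n).filter Odd)
    fun i hi => (Finset.mem_Icc.1 (Finset.mem_filter.1 hi).1).1
  obtain ⟨hmuθ, hlamθ⟩ := mu_eq_and_lam_eq_of_sub_mul_eq (coeff_coe_eq_zero_of_degree_lt hdeg) hW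
    (map_toZMod_coe_one_add_X_pow_sub_one n) hl.symm (by omega) hG
  refine ⟨?_, hmuθ.trans hmuL.symm, by rw [hlamθ, hlamL, add_comm]⟩
  rintro rfl
  simp [mu, vp] at hmuθ
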